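/- Let M be a 2×3 integer matrix with columns m₁=(x₁,y₁), m₂=(x₂,y₂), m₃=(x₃,y₃), xᵢ > 0, y₁/x₁ < y₂/x₂ < y₃/x₃, and suppose the 2×2 minors Y₁₂, Y₁₃, Y₂₃ are pairwise relatively prime. Then for every (n₁,n₂) ∈ ℤ² in the closed cone spanned by m₂ and m₃, t((n₁,n₂)|M) = (n₁y₃-n₂x₃)/(Y₂₃Y₁₃) - {Y₁₃⁻¹(n₁y₃-n₂x₃)/Y₂₃} - {Y₂₃⁻¹(n₁y₃-n₂x₃)/Y₁₃} + 1, where Y₁₃⁻¹Y₁₃ ≡ 1 (mod Y₂₃) and Y₂₃⁻¹Y₂₃ ≡ 1 (mod Y₁₃). -/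

import Mathlib

/-!
Crossing `a m₁ + b m₂ + c m₃ = n` with `m₃` and with `m₂` gives `a Y₁₃ + b Y₂₃ = N` and
`c Y₂₃ = a Y₁₂ - M`, where `N = n₁y₃ - n₂x₃ ≥ 0` and `M = n₁y₂ - n₂x₂ ≤ 0` on the cone spanned by
`m₂, m₃`. As `Y₁₃` and `Y₂₃` are coprime, `c` is then automatically a nonnegative integer, so we
are counting the nonnegative solutions of `a Y₁₃ + b Y₂₃ = N`: Popoviciu's theorem.

For Popoviciu's theorem with coprime `p, q`, the Chinese remainder theorem gives
`N = D p q + r p + s q` with `r = p'N mod q` and `s = q'N mod p`, and the nonnegative solutions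
of `a p + b q = N` are exactly `(r + k q, s + (D - k) p)` for `0 ≤ k ≤ D`. Hence there are `D + 1`
of them, and `D + 1 = N / (p q) - r / q - s / p + 1`.
-/

theorem Int.fract_intCast_div_of_pos {k : Type*} [Field k] [LinearOrder k] [IsOrderedRing k]
    [FloorRing k] (m : ℤ) {n : ℤ} (hn : 0 < n) :
    Int.fract ((m : k) / n) = ((m % n : ℤ) : k) / n := by
  lift n to ℕ using hn.le
  simp only [Int.cast_natCast]
  exact Int.fract_div_intCast_eq_div_intCast_mod

theorem Int.mul_add_mul_modEq_of_modEq_inv {p q p' r N : ℤ} (s : ℤ)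
    (hp' : p' * p ≡ 1 [ZMOD q]) (hr : r ≡ p' * N [ZMOD q]) :
    r * p + s * q ≡ N [ZMOD q] :=
  calc r * p + s * q ≡ p' * N * p + 0 [ZMOD q] :=
        (hr.mul_right p).add (Int.modEq_zero_iff_dvd.2 (dvd_mul_left q s))
    _ = N * (p' * p) := by ring
    _ ≡ N * 1 [ZMOD q] := hp'.mul_left N
    _ = N := mul_one N

theorem Int.exists_eq_mul_mul_add_emod_mul_add_emod_mul {p q p' q' : ℤ} (N : ℤ)
    (hpq : IsCoprime p q) (hp' : p' * p ≡ 1 [ZMOD q]) (hq' : q' * q ≡ 1 [ZMOD p]) :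
    ∃ D, N = D * p * q + p' * N % q * p + q' * N % p * q := by
  have hq : q ∣ N - (p' * N % q * p + q' * N % p * q) :=
    (Int.mul_add_mul_modEq_of_modEq_inv _ hp' (Int.mod_modEq _ _)).dvd
  have hp : p ∣ N - (p' * N % q * p + q' * N % p * q) := by
    rw [add_comm]
    exact (Int.mul_add_mul_modEq_of_modEq_inv _ hq' (Int.mod_modEq _ _)).dvd
  obtain ⟨D, hD⟩ := hpq.mul_dvd hp hq
  exact ⟨D, by linear_combination hD⟩

def nonnegSolutions (p q N : ℤ) : Set (ℤ × ℤ) :=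
  {ab | 0 ≤ ab.1 ∧ 0 ≤ ab.2 ∧ ab.1 * p + ab.2 * q = N}

theorem exists_nonneg_eq_add_mul_of_dvd {p q r a : ℤ} (hpq : IsCoprime p q) (ha : 0 ≤ a)
    (hr : 0 ≤ r) (hrq : r < q) (hdvd : q ∣ (a - r) * p) : ∃ k, 0 ≤ k ∧ a = r + k * q := by
  obtain ⟨k, hk⟩ := hpq.symm.dvd_of_dvd_mul_right hdvd
  refine ⟨k, ?_, by linear_combination hk⟩
  by_contra! hk0
  nlinarith [mul_le_mul_of_nonneg_left (Int.le_sub_one_of_lt hk0) (hr.trans hrq.le)]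

theorem nonnegSolutions_eq_image {p q r s D : ℤ} (hpq : IsCoprime p q)
    (hr : 0 ≤ r) (hrq : r < q) (hs : 0 ≤ s) (hsp : s < p) :
    nonnegSolutions p q (D * p * q + r * p + s * q) =
      (fun k ↦ (r + k * q, s + (D - k) * p)) '' Set.Icc 0 D := by
  have hp : 0 < p := hs.trans_lt hsp
  have hq : 0 < q := hr.trans_lt hrq
  ext ⟨a, b⟩
  simp only [nonnegSolutions, Set.mem_ofPred_eq, Set.mem_image, Set.mem_Icc, Prod.mk.injEq]
  constructor
  · rintro ⟨ha, hb, hab⟩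
    obtain ⟨k, hk, rfl⟩ := exists_nonneg_eq_add_mul_of_dvd hpq ha hr hrq
      ⟨D * p + s - b, by linear_combination hab⟩
    obtain ⟨j, hj, rfl⟩ := exists_nonneg_eq_add_mul_of_dvd hpq.symm hb hs hsp
      ⟨D * q - k * q, by linear_combination hab⟩
    have hkj : k + j = D := by
      have hpq0 : p * q ≠ 0 := by positivity
      exact mul_right_cancel₀ hpq0 (by linear_combination hab)
    exact ⟨k, ⟨hk, by linarith⟩, rfl, by rw [← hkj]; ring⟩
  · rintro ⟨k, ⟨hk, hkD⟩, rfl, rfl⟩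
    have hDk : 0 ≤ D - k := by linarith
    exact ⟨by positivity, by positivity, by ring⟩

theorem ncard_nonnegSolutions {p q r s D : ℤ} (hpq : IsCoprime p q)
    (hr : 0 ≤ r) (hrq : r < q) (hs : 0 ≤ s) (hsp : s < p) :
    (nonnegSolutions p q (D * p * q + r * p + s * q)).ncard = (D + 1).toNat := by
  have hinj : Function.Injective fun k ↦ (r + k * q, s + (D - k) * p) := fun k₁ k₂ h ↦
    mul_right_cancel₀ (hr.trans_lt hrq).ne' (add_left_cancel (congrArg Prod.fst h))
  rw [nonnegSolutions_eq_image hpq hr hrq hs hsp, Set.ncard_image_of_injective _ hinj,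
    ← Finset.coe_Icc, Set.ncard_coe_finset, Int.card_Icc, sub_zero]

theorem ncard_nonnegSolutions_eq_popoviciu {p q p' q' N : ℤ} (hp : 0 < p) (hq : 0 < q)
    (hpq : IsCoprime p q) (hp' : p' * p ≡ 1 [ZMOD q]) (hq' : q' * q ≡ 1 [ZMOD p])
    (hN : 0 ≤ N) :
    ((nonnegSolutions p q N).ncard : ℝ) =
      (N : ℝ) / ((p * q : ℤ) : ℝ) - Int.fract (((p' * N : ℤ) : ℝ) / (q : ℝ))
        - Int.fract (((q' * N : ℤ) : ℝ) / (p : ℝ)) + 1 := by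
  obtain ⟨D, hD⟩ := Int.exists_eq_mul_mul_add_emod_mul_add_emod_mul N hpq hp' hq'
  set r := p' * N % q
  set s := q' * N % p
  have hr : 0 ≤ r := Int.emod_nonneg _ hq.ne'
  have hrq : r < q := Int.emod_lt_of_pos _ hq
  have hs : 0 ≤ s := Int.emod_nonneg _ hp.ne'
  have hsp : s < p := Int.emod_lt_of_pos _ hp
  have hD1 : 0 ≤ D + 1 := by
    by_contra! hD2
    nlinarith [mul_le_mul_of_nonneg_right (Int.le_sub_one_of_lt hD2) (mul_pos hp hq).le]
  have hcard : (nonnegSolutions p q N).ncard = (D + 1).toNat :=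
    hD ▸ ncard_nonnegSolutions hpq hr hrq hs hsp
  have hcardR : ((D + 1).toNat : ℝ) = D + 1 := by exact_mod_cast Int.toNat_of_nonneg hD1
  have hDR : (N : ℝ) = D * p * q + r * p + s * q := by exact_mod_cast hD
  rw [hcard, hcardR, Int.fract_intCast_div_of_pos _ hq, Int.fract_intCast_div_of_pos _ hp]
  push_cast
  have hp0 : (p : ℝ) ≠ 0 := by positivity
  have hq0 : (q : ℝ) ≠ 0 := by positivity
  field_simp
  linear_combination -hDR

theorem cross_nonneg_of_mem_cone {x2 y2 x3 y3 n1 n2 : ℤ} (hY23 : 0 ≤ x2 * y3 - y2 * x3)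
    (hcone : ∃ l1 l2 : ℝ, 0 ≤ l1 ∧ 0 ≤ l2 ∧
      (n1 : ℝ) = l1 * x2 + l2 * x3 ∧ (n2 : ℝ) = l1 * y2 + l2 * y3) :
    0 ≤ n1 * y3 - n2 * x3 ∧ n1 * y2 - n2 * x2 ≤ 0 := by
  obtain ⟨l1, l2, hl1, hl2, hn1, hn2⟩ := hcone
  have hY23R : (0 : ℝ) ≤ x2 * y3 - y2 * x3 := by exact_mod_cast hY23
  have hN : ((n1 * y3 - n2 * x3 : ℤ) : ℝ) = l1 * (x2 * y3 - y2 * x3) := by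
    push_cast [hn1, hn2]; ring
  have hM : ((n1 * y2 - n2 * x2 : ℤ) : ℝ) = -(l2 * (x2 * y3 - y2 * x3)) := by
    push_cast [hn1, hn2]; ring
  constructor
  · exact_mod_cast hN ▸ mul_nonneg hl1 hY23R
  · exact_mod_cast hM ▸ neg_nonpos.2 (mul_nonneg hl2 hY23R)

theorem exists_third_coord_of_mul_add_mul_eq {x1 y1 x2 y2 x3 y3 n1 n2 a b : ℤ}
    (hY12 : 0 ≤ x1 * y2 - y1 * x2) (hY23 : 0 < x2 * y3 - y2 * x3)
    (hcop : IsCoprime (x1 * y3 - y1 * x3) (x2 * y3 - y2 * x3)) (hM : n1 * y2 - n2 * x2 ≤ 0)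
    (ha : 0 ≤ a) (hab : a * (x1 * y3 - y1 * x3) + b * (x2 * y3 - y2 * x3) = n1 * y3 - n2 * x3) :
    ∃ c : ℕ, a * x1 + b * x2 + c * x3 = n1 ∧ a * y1 + b * y2 + c * y3 = n2 := by
  -- `Y₁₃ (a Y₁₂ - M) = -(b Y₁₂ + n₁y₁ - n₂x₁) Y₂₃`
  obtain ⟨c, hc⟩ : x2 * y3 - y2 * x3 ∣ a * (x1 * y2 - y1 * x2) - (n1 * y2 - n2 * x2) :=
    hcop.symm.dvd_of_dvd_mul_left ⟨-(b * (x1 * y2 - y1 * x2)) - (n1 * y1 - n2 * x1), by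
      linear_combination (x1 * y2 - y1 * x2) * hab⟩
  have hc0 : 0 ≤ c := by
    refine nonneg_of_mul_nonneg_right ?_ hY23
    rw [← hc]
    nlinarith
  lift c to ℕ using hc0
  refine ⟨c, mul_left_cancel₀ hY23.ne' ?_, mul_left_cancel₀ hY23.ne' ?_⟩
  · linear_combination x2 * hab - x3 * hc
  · linear_combination y2 * hab - y3 * hc

theorem card_solutions_eq_ncard_nonnegSolutions {x1 y1 x2 y2 x3 y3 n1 n2 : ℤ}
    (hY12 : 0 ≤ x1 * y2 - y1 * x2) (hY23 : 0 < x2 * y3 - y2 * x3)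
    (hcop : IsCoprime (x1 * y3 - y1 * x3) (x2 * y3 - y2 * x3)) (hM : n1 * y2 - n2 * x2 ≤ 0) :
    Nat.card {v : Fin 3 → ℕ //
        (v 0 : ℤ) * x1 + (v 1 : ℤ) * x2 + (v 2 : ℤ) * x3 = n1 ∧
        (v 0 : ℤ) * y1 + (v 1 : ℤ) * y2 + (v 2 : ℤ) * y3 = n2} =
      (nonnegSolutions (x1 * y3 - y1 * x3) (x2 * y3 - y2 * x3) (n1 * y3 - n2 * x3)).ncard := by
  rw [← Nat.card_coe_set_eq]
  refine Nat.card_eq_of_bijective (fun v ↦ ⟨((v.1 0 : ℤ), (v.1 1 : ℤ)), by positivity,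
    by positivity, by linear_combination y3 * v.2.1 - x3 * v.2.2⟩) ⟨?_, ?_⟩
  · rintro ⟨v, hv1, hv2⟩ ⟨w, hw1, hw2⟩ hvw
    obtain ⟨h0, h1⟩ : (v 0 : ℤ) = w 0 ∧ (v 1 : ℤ) = w 1 :=
      Prod.ext_iff.1 (congrArg Subtype.val hvw)
    have h2 : (v 2 : ℤ) = w 2 := mul_left_cancel₀ hY23.ne' <| by
      linear_combination x2 * (hv2 - hw2) - y2 * (hv1 - hw1) + (x1 * y2 - y1 * x2) * h0
    ext i
    fin_cases i <;> simp_all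
  · rintro ⟨⟨a, b⟩, ha, hb, hab⟩
    obtain ⟨c, hc1, hc2⟩ := exists_third_coord_of_mul_add_mul_eq hY12 hY23 hcop hM ha hab
    lift a to ℕ using ha
    lift b to ℕ using hb
    exact ⟨⟨![a, b, c], hc1, hc2⟩, rfl⟩

theorem generalized_popoviciu_cone2_general
    (x1 y1 x2 y2 x3 y3 : ℤ)
    (hx1 : 0 < x1) (hx2 : 0 < x2) (hx3 : 0 < x3)
    (h12 : y1 * x2 < y2 * x1) (h23 : y2 * x3 < y3 * x2)
    (Y13 Y23 : ℤ)
    (hY13 : Y13 = x1 * y3 - y1 * x3)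
    (hY23 : Y23 = x2 * y3 - y2 * x3)
    (hc3 : IsCoprime Y13 Y23)
    (Y13inv Y23inv : ℤ)
    (hY13inv : Y13inv * Y13 ≡ 1 [ZMOD Y23])
    (hY23inv : Y23inv * Y23 ≡ 1 [ZMOD Y13])
    (n1 n2 : ℤ)
    (hcone : ∃ l1 l2 : ℝ, 0 ≤ l1 ∧ 0 ≤ l2 ∧
      (n1 : ℝ) = l1 * x2 + l2 * x3 ∧ (n2 : ℝ) = l1 * y2 + l2 * y3) :
    (Nat.card {v : Fin 3 → ℕ //
        (v 0 : ℤ) * x1 + (v 1 : ℤ) * x2 + (v 2 : ℤ) * x3 = n1 ∧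
        (v 0 : ℤ) * y1 + (v 1 : ℤ) * y2 + (v 2 : ℤ) * y3 = n2} : ℝ)
      = ((n1 * y3 - n2 * x3 : ℤ) : ℝ) / ((Y23 * Y13 : ℤ) : ℝ)
        - Int.fract (((Y13inv * (n1 * y3 - n2 * x3) : ℤ) : ℝ) / (Y23 : ℝ))
        - Int.fract (((Y23inv * (n1 * y3 - n2 * x3) : ℤ) : ℝ) / (Y13 : ℝ)) + 1 := by
  subst hY13 hY23
  have hY12pos : 0 < x1 * y2 - y1 * x2 := by linarith
  have hY23pos : 0 < x2 * y3 - y2 * x3 := by linarith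
  -- `x₂ Y₁₃ = x₁ Y₂₃ + x₃ Y₁₂`
  have hY13pos : 0 < x1 * y3 - y1 * x3 :=
    pos_of_mul_pos_right (a := x2) (by nlinarith [mul_pos hx1 hY23pos, mul_pos hx3 hY12pos])
      hx2.le
  obtain ⟨hN, hM⟩ := cross_nonneg_of_mem_cone hY23pos.le hcone
  rw [card_solutions_eq_ncard_nonnegSolutions hY12pos.le hY23pos hc3 hM,
    ncard_nonnegSolutions_eq_popoviciu hY13pos hY23pos hc3 hY13inv hY23inv hN,
    mul_comm (x1 * y3 - y1 * x3)]

/-- Generalized Popoviciu formula on the second fundamental cone, when the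
minors `Y₁₂, Y₁₃, Y₂₃` are pairwise coprime. -/
theorem generalized_popoviciu_cone2
    (x1 y1 x2 y2 x3 y3 : ℤ)
    (hx1 : 0 < x1) (hx2 : 0 < x2) (hx3 : 0 < x3)
    (h12 : y1 * x2 < y2 * x1) (h23 : y2 * x3 < y3 * x2)
    (Y12 Y13 Y23 : ℤ)
    (hY12 : Y12 = x1 * y2 - y1 * x2)
    (hY13 : Y13 = x1 * y3 - y1 * x3)
    (hY23 : Y23 = x2 * y3 - y2 * x3)
    (hc1 : IsCoprime Y12 Y13) (hc2 : IsCoprime Y12 Y23) (hc3 : IsCoprime Y13 Y23)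
    (Y13inv Y23inv : ℤ)
    (hY13inv : Y13inv * Y13 ≡ 1 [ZMOD Y23])
    (hY23inv : Y23inv * Y23 ≡ 1 [ZMOD Y13])
    (n1 n2 : ℤ)
    (hcone : ∃ l1 l2 : ℝ, 0 ≤ l1 ∧ 0 ≤ l2 ∧
      (n1 : ℝ) = l1 * x2 + l2 * x3 ∧ (n2 : ℝ) = l1 * y2 + l2 * y3) :
    (Nat.card {v : Fin 3 → ℕ //
        (v 0 : ℤ) * x1 + (v 1 : ℤ) * x2 + (v 2 : ℤ) * x3 = n1 ∧
        (v 0 : ℤ) * y1 + (v 1 : ℤ) * y2 + (v 2 : ℤ) * y3 = n2} : ℝ)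
      = ((n1 * y3 - n2 * x3 : ℤ) : ℝ) / ((Y23 * Y13 : ℤ) : ℝ)
        - Int.fract (((Y13inv * (n1 * y3 - n2 * x3) : ℤ) : ℝ) / (Y23 : ℝ))
        - Int.fract (((Y23inv * (n1 * y3 - n2 * x3) : ℤ) : ℝ) / (Y13 : ℝ)) + 1 :=
  generalized_popoviciu_cone2_general x1 y1 x2 y2 x3 y3 hx1 hx2 hx3 h12 h23 Y13 Y23 hY13 hY23 hc3
    Y13inv Y23inv hY13inv hY23inv n1 n2 hcone
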